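/- arXiv:0901.1339 — 4 statements merged into one kernel-verified Lean document; each statement's English description precedes it below -/
import Mathlib

section
/- The center of the Schrödinger-Virasoro algebra L is the one-dimensional subspace F·M_0. -/
open TensorProduct

/-- Index set for the basis of the Schrödinger–Virasoro algebra:
`Sum.inl n ↔ L_n`, `Sum.inr (Sum.inl n) ↔ Y_{n+1/2}`, `Sum.inr (Sum.inr n) ↔ M_n`. -/
abbrev SVIx : Type := ℤ ⊕ ℤ ⊕ ℤ

variable (F : Type) [Field F] [CharZero F]

/-- Underlying space of the Schrödinger–Virasoro algebra: the free `F`-module on `SVIx`. -/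
abbrev SVL := SVIx →₀ F

noncomputable def Lb (n : ℤ) : SVL F := Finsupp.single (Sum.inl n) 1
noncomputable def Yb (n : ℤ) : SVL F := Finsupp.single (Sum.inr (Sum.inl n)) 1
noncomputable def Mb (n : ℤ) : SVL F := Finsupp.single (Sum.inr (Sum.inr n)) 1

/-- The bracket of basis vectors.  Here `Yb n` stands for `Y_{n+1/2}`, so
`[L_m, Y_{n+1/2}] = ((n+1/2) - m/2) Y_{m+n+1/2}` and
`[Y_{a+1/2}, Y_{b+1/2}] = (b-a) M_{a+b+1}`; all other brackets vanish. -/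
noncomputable def brIx : SVIx → SVIx → SVL F
  | Sum.inl m, Sum.inl n => ((n - m : ℤ) : F) • Lb F (m + n)
  | Sum.inl m, Sum.inr (Sum.inl n) => (((2*n + 1 - m : ℤ) : F) / 2) • Yb F (m + n)
  | Sum.inl m, Sum.inr (Sum.inr n) => ((n : ℤ) : F) • Mb F (m + n)
  | Sum.inr (Sum.inl n), Sum.inl m => -((((2*n + 1 - m : ℤ) : F) / 2) • Yb F (m + n))
  | Sum.inr (Sum.inl a), Sum.inr (Sum.inl b) => ((b - a : ℤ) : F) • Mb F (a + b + 1)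
  | Sum.inr (Sum.inr n), Sum.inl m => -(((n : ℤ) : F) • Mb F (m + n))
  | _, _ => 0

/-- The bracket of the Schrödinger–Virasoro algebra: the bilinear extension of `brIx`. -/
noncomputable def bk : SVL F →ₗ[F] SVL F →ₗ[F] SVL F :=
  Finsupp.lsum F fun i => LinearMap.toSpanSingleton F (SVL F →ₗ[F] SVL F)
    (Finsupp.lsum F fun j => LinearMap.toSpanSingleton F (SVL F) (brIx F i j))

abbrev VV := SVL F ⊗[F] SVL F

noncomputable instance : AddCommGroup (VV F) := inferInstance

noncomputable instance : Zero (VV F) :=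
  (inferInstance : AddCommMonoid (VV F)).toAddMonoid.toZero

/-- The adjoint diagonal action of `L` on `L ⊗ L`, as a bilinear map:
`x · (a ⊗ b) = [x,a] ⊗ b + a ⊗ [x,b]`. -/
noncomputable def adVb : SVL F →ₗ[F] VV F →ₗ[F] VV F :=
  ((LinearMap.rTensorHom (SVL F) : (SVL F →ₗ[F] SVL F) →ₗ[F] (VV F →ₗ[F] VV F)) ∘ₗ bk F)
    + ((LinearMap.lTensorHom (SVL F) : (SVL F →ₗ[F] SVL F) →ₗ[F] (VV F →ₗ[F] VV F)) ∘ₗ bk F)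

/-- The twist map `τ(x ⊗ y) = y ⊗ x`. -/
noncomputable def tau : VV F →ₗ[F] VV F := (TensorProduct.comm F (SVL F) (SVL F)).toLinearMap

/-- The map `1 - τ`. -/
noncomputable def oneMinusTau : VV F →ₗ[F] VV F where
  toFun v := v - tau F v
  map_add' x y := by
    simp only [map_add]; exact sub_add_sub_comm x (tau F x) y (tau F y) ▸ rfl
  map_smul' c x := by simp only [map_smul, RingHom.id_apply, smul_sub]

/-- `Im (1 - τ) ⊂ L ⊗ L`. -/
noncomputable def skewIm : Submodule F (VV F) := LinearMap.range (oneMinusTau F)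

/-!
A central element `x` commutes with `L₀`, and `ad L₀` acts diagonally on the basis, with
eigenvalue `n` on `L_n` and `M_n` and `p` on `Y_p`. Since no `p ∈ 1/2 + ℤ` vanishes, `[x, L₀] = 0`
leaves only the `L₀`- and `M₀`-coordinates of `x`, and `[L₀, M₁] = M₁` kills the `L₀`-coordinate.
-/

section

omit [CharZero F]

lemma bk_single_single (i j : SVIx) (a b : F) :
    bk F (Finsupp.single i a) (Finsupp.single j b) = (a * b) • brIx F i j := by
  simp [bk, mul_smul, smul_comm a b]

lemma bk_apply_single (x : SVL F) (j : SVIx) :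
    bk F x (Finsupp.single j 1) = x.sum fun i a => a • brIx F i j := by
  simp [bk, Finsupp.lsum_apply, LinearMap.finsupp_sum_apply]

lemma bk_apply_single_apply_of_forall_ne (x : SVL F) {i₀ j k : SVIx}
    (h : ∀ i ≠ i₀, brIx F i j k = 0) : bk F x (Finsupp.single j 1) k = x i₀ * brIx F i₀ j k := by
  rw [bk_apply_single, Finsupp.sum_apply, Finsupp.sum_eq_single i₀]
  · simp
  · intro i _ hi
    simp [h i hi]
  · simp

lemma brIx_Mb_one_apply (i : SVIx) :
    brIx F i (.inr (.inr 1)) (.inr (.inr 1)) = if i = .inl 0 then 1 else 0 := by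
  rcases i with n | n | n <;> simp [brIx, Mb, Finsupp.single_apply]

lemma bk_Mb_one_apply (x : SVL F) : bk F x (Mb F 1) (.inr (.inr 1)) = x (.inl 0) := by
  rw [Mb, bk_apply_single_apply_of_forall_ne F x (i₀ := .inl 0)] <;> simp_all [brIx_Mb_one_apply]

lemma brIx_Mb_zero (j : SVIx) : brIx F (.inr (.inr 0)) j = 0 := by
  rcases j with n | n | n <;> simp [brIx]

lemma bk_Mb_zero : bk F (Mb F 0) = 0 :=
  Finsupp.lhom_ext fun j b => by simp [Mb, bk_single_single, brIx_Mb_zero]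

end

/-- The `ad L₀`-eigenvalue of the basis vector `i` (recall `Yb n = Y_{n+1/2}`). -/
def weight : SVIx → F
  | .inl n => n
  | .inr (.inl n) => n + 1 / 2
  | .inr (.inr n) => n

lemma weight_ne_zero {i : SVIx} (hL : i ≠ .inl 0) (hM : i ≠ .inr (.inr 0)) : weight F i ≠ 0 := by
  rcases i with n | n | n
  · simpa [weight] using hL
  · intro h
    have h2 : ((2 * n + 1 : ℤ) : F) = 0 := by
      simp only [weight] at h
      push_cast
      linear_combination 2 * h
    have : 2 * n + 1 = 0 := by exact_mod_cast h2
    omega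
  · simpa [weight] using hM

lemma brIx_inl_zero (i : SVIx) : brIx F i (.inl 0) = Finsupp.single i (-weight F i) := by
  rcases i with n | n | n <;>
    simp only [brIx, weight, Lb, Yb, Mb, Finsupp.smul_single_one, ← Finsupp.single_neg, zero_add,
      add_zero] <;>
    congr 1 <;> push_cast <;> ring

lemma bk_Lb_zero_apply (x : SVL F) (k : SVIx) : bk F x (Lb F 0) k = -(x k * weight F k) := by
  rw [Lb, bk_apply_single_apply_of_forall_ne F x (i₀ := k)]
  · simp [brIx_inl_zero]
  · intro i hi
    simp [brIx_inl_zero, hi]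

/-- The center of the Schrödinger–Virasoro algebra is `F • M₀`. -/
theorem sv_center_eq_span_M0 :
    ∀ x : SVL F, (∀ y : SVL F, bk F x y = 0) ↔ x ∈ Submodule.span F {Mb F 0} := by
  intro x
  rw [Submodule.mem_span_singleton]
  constructor
  · intro hx
    have hweight (k : SVIx) : x k * weight F k = 0 := by
      simpa [bk_Lb_zero_apply] using congr($(hx (Lb F 0)) k)
    have hL₀ : x (.inl 0) = 0 := by
      simpa [bk_Mb_one_apply] using congr($(hx (Mb F 1)) (.inr (.inr 1)))
    refine ⟨x (.inr (.inr 0)), Finsupp.ext fun k => ?_⟩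
    by_cases hM : k = .inr (.inr 0)
    · simp [hM, Mb]
    by_cases hL : k = .inl 0
    · simp [hL, hL₀, Mb]
    have hk : x k = 0 := by simpa [weight_ne_zero F hL hM] using hweight k
    simp [Mb, Ne.symm hM, hk]
  · rintro ⟨a, rfl⟩ y
    rw [map_smul, bk_Mb_zero, smul_zero, LinearMap.zero_apply]
end

section
/- The Schrödinger-Virasoro algebra L is generated as a Lie algebra by the five elements L_1, L_{−1}, L_2, L_{−2}, Y_{1/2}. -/
open TensorProduct

variable (F : Type) [Field F] [CharZero F]

/-! Bracketing with `L_{±1}` moves `L_n` to `L_{n±1}` with coefficient `n ∓ 1`, which vanishes only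
on the steps `L_{±1} ↦ L_{±2}`; this is why `L_{±2}` are needed, and `L_0 = [L_{-1}, L_1] / 2`.
Then `[L_n, Y_{1/2}] = ((1 - n) / 2) Y_{n+1/2}` gives every `Y` except `Y_{3/2}`, which is a
multiple of `[L_2, Y_{-1/2}]`, and `[Y_{-1/2}, Y_{n+1/2}] = (n + 1) M_n` gives every `M` except
`M_{-1}`, a multiple of `[Y_{1/2}, Y_{-3/2}]`. -/

theorem Finsupp.eq_top_of_forall_single_one_mem {R ι : Type*} [Semiring R]
    {P : Submodule R (ι →₀ R)} (h : ∀ i, Finsupp.single i 1 ∈ P) : P = ⊤ :=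
  eq_top_iff.2 <| Finsupp.basisSingleOne.span_eq.ge.trans <| Submodule.span_le.2 <|
    Set.range_subset_iff.2 fun i => by simpa using h i

section

variable {K : Type} [Field K]

lemma bk_single_one (i j : SVIx) :
    bk K (Finsupp.single i 1) (Finsupp.single j 1) = brIx K i j := by
  simp [bk, LinearMap.toSpanSingleton_apply]

lemma bk_Lb_Lb (m n : ℤ) : bk K (Lb K m) (Lb K n) = ((n - m : ℤ) : K) • Lb K (m + n) :=
  bk_single_one _ _

lemma bk_Lb_Yb (m n : ℤ) :
    bk K (Lb K m) (Yb K n) = (((2 * n + 1 - m : ℤ) : K) / 2) • Yb K (m + n) :=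
  bk_single_one _ _

lemma bk_Yb_Yb (a b : ℤ) : bk K (Yb K a) (Yb K b) = ((b - a : ℤ) : K) • Mb K (a + b + 1) :=
  bk_single_one _ _

def BracketClosed (P : Submodule K (SVL K)) : Prop :=
  ∀ x y, x ∈ P → y ∈ P → bk K x y ∈ P

namespace BracketClosed

variable [CharZero K] {P : Submodule K (SVL K)}

lemma Lb_add_mem (hP : BracketClosed P) {m n : ℤ} (hm : Lb K m ∈ P) (hn : Lb K n ∈ P)
    (hmn : m ≠ n) : Lb K (m + n) ∈ P := by
  have h := hP _ _ hm hn
  rwa [bk_Lb_Lb, Submodule.smul_mem_iff _ (Int.cast_ne_zero.2 (sub_ne_zero.2 hmn.symm))] at h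

lemma Yb_add_mem (hP : BracketClosed P) {m n : ℤ} (hm : Lb K m ∈ P) (hn : Yb K n ∈ P)
    (hmn : 2 * n + 1 ≠ m) : Yb K (m + n) ∈ P := by
  have h := hP _ _ hm hn
  rwa [bk_Lb_Yb, Submodule.smul_mem_iff _
    (div_ne_zero (Int.cast_ne_zero.2 (sub_ne_zero.2 hmn)) two_ne_zero)] at h

lemma Mb_add_mem (hP : BracketClosed P) {a b : ℤ} (ha : Yb K a ∈ P) (hb : Yb K b ∈ P)
    (hab : a ≠ b) : Mb K (a + b + 1) ∈ P := by
  have h := hP _ _ ha hb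
  rwa [bk_Yb_Yb, Submodule.smul_mem_iff _ (Int.cast_ne_zero.2 (sub_ne_zero.2 hab.symm))] at h

lemma Lb_mem (hP : BracketClosed P) (hp1 : Lb K 1 ∈ P) (hm1 : Lb K (-1) ∈ P)
    (hp2 : Lb K 2 ∈ P) (hm2 : Lb K (-2) ∈ P) (n : ℤ) : Lb K n ∈ P := by
  have h0 : Lb K 0 ∈ P := by simpa using hP.Lb_add_mem hp1 hm1 (by decide)
  induction n using Int.induction_on with
  | zero => exact h0
  | succ n ih =>
    rcases eq_or_ne (n : ℤ) 1 with hn | hn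
    · rw [hn]; exact hp2
    · rw [add_comm]; exact hP.Lb_add_mem hp1 ih hn.symm
  | pred n ih =>
    rcases eq_or_ne (n : ℤ) 1 with hn | hn
    · rw [hn]; exact hm2
    · rw [sub_eq_add_neg, add_comm]; exact hP.Lb_add_mem hm1 ih (by omega)

lemma Yb_mem (hP : BracketClosed P) (hL : ∀ n, Lb K n ∈ P) (h0 : Yb K 0 ∈ P) (n : ℤ) :
    Yb K n ∈ P := by
  rcases eq_or_ne n 1 with rfl | hn
  · have hm1 : Yb K (-1) ∈ P := by simpa using hP.Yb_add_mem (hL (-1)) h0 (by decide)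
    simpa using hP.Yb_add_mem (hL 2) hm1 (by decide)
  · simpa using hP.Yb_add_mem (hL n) h0 hn.symm

lemma Mb_mem (hP : BracketClosed P) (hY : ∀ n, Yb K n ∈ P) (n : ℤ) : Mb K n ∈ P := by
  rcases eq_or_ne n (-1) with rfl | hn
  · simpa using hP.Mb_add_mem (hY 0) (hY (-2)) (by decide)
  · simpa using hP.Mb_add_mem (hY (-1)) (hY n) (by omega)

end BracketClosed

end

/-- The Schrödinger–Virasoro algebra is generated by `L₁, L₋₁, L₂, L₋₂, Y_{1/2}`:
every submodule containing these five elements and closed under the bracket is everything. -/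
theorem sv_generators :
    ∀ P : Submodule F (SVL F),
      Lb F 1 ∈ P → Lb F (-1) ∈ P → Lb F 2 ∈ P → Lb F (-2) ∈ P → Yb F 0 ∈ P →
      (∀ x y : SVL F, x ∈ P → y ∈ P → bk F x y ∈ P) →
      P = ⊤ := by
  intro P hp1 hm1 hp2 hm2 hY0 (hP : BracketClosed P)
  have hL := hP.Lb_mem hp1 hm1 hp2 hm2
  have hY := hP.Yb_mem hL hY0
  refine Finsupp.eq_top_of_forall_single_one_mem fun i => ?_
  rcases i with n | n | n
  · exact hL n
  · exact hY n
  · exact hP.Mb_mem hY n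
end

section
/- Regard the n-fold tensor power L^{⊗n} of the Schrödinger-Virasoro algebra L as an L-module under the adjoint diagonal action. If r ∈ L^{⊗n} satisfies x·r = 0 for all x ∈ L, then r ∈ F·(M_0 ⊗ ⋯ ⊗ M_0) (i.e., r is a scalar multiple of M_0^{⊗n}). -/
open TensorProduct

variable (F : Type) [Field F] [CharZero F]

open scoped TensorProduct

noncomputable instance (n : ℕ) : Zero (⨂[F] _ : Fin n, SVL F) :=
  (inferInstance : AddCommMonoid (⨂[F] _ : Fin n, SVL F)).toAddMonoid.toZero

/-- The adjoint diagonal action of `x ∈ L` on the `n`-fold tensor power `L^{⊗n}`. -/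
noncomputable def adTn (n : ℕ) (x : SVL F) :
    (⨂[F] _ : Fin n, SVL F) →ₗ[F] (⨂[F] _ : Fin n, SVL F) :=
  ∑ i : Fin n, PiTensorProduct.map (fun j => if j = i then bk F x else LinearMap.id)


/-!
Expand `r` in the basis of pure tensors of basis vectors of `L`. Each basis vector `e_i` acts
monomially, `[e_i, e_b] = s_i(b) e_{t_i(b)}`, with `t_i` injective where `s_i ≠ 0`. Suppose a
basis tensor `σ` in the support of `r` carries some `e_b ≠ M₀` in slot `j`. Choose `e_i` with
`s_i(b) ≠ 0` and `t_i(b) = M_k`, `k` larger than every index occurring in slot `j` of the support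
(`i = M_k` for `b = L_m`, `Y_a` for `Y_b`, `L_k` for `M_m` with `m ≠ 0`). In `e_i · r` the
coefficient of `σ` with slot `j` replaced by `M_k` is then `s_i(b)` times that of `σ`, since
no other term can produce this tensor; so `e_i · r ≠ 0`.
-/
section DiagonalAction

open Function PiTensorProduct

variable {R κ ι : Type*} [CommSemiring R] [Fintype κ] [DecidableEq κ]

noncomputable def diagonalAction (A : (ι →₀ R) →ₗ[R] ι →₀ R) :
    (⨂[R] _ : κ, ι →₀ R) →ₗ[R] ⨂[R] _ : κ, ι →₀ R :=
  ∑ j : κ, map fun l => if l = j then A else LinearMap.id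

variable (R κ ι) in
noncomputable abbrev tensorPowerBasis : Module.Basis (κ → ι) R (⨂[R] _ : κ, ι →₀ R) :=
  Basis.piTensorProduct fun _ => Finsupp.basisSingleOne

variable {A : (ι →₀ R) →ₗ[R] ι →₀ R} {s : ι → R} {t : ι → ι}

theorem diagonalAction_tensorPowerBasis
    (hA : ∀ b, A (Finsupp.single b 1) = s b • Finsupp.single (t b) 1) (σ : κ → ι) :
    diagonalAction A (tensorPowerBasis R κ ι σ) =
      ∑ j, s (σ j) • tensorPowerBasis R κ ι (update σ j (t (σ j))) := by
  simp only [diagonalAction, LinearMap.sum_apply, Basis.piTensorProduct_apply,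
    Finsupp.coe_basisSingleOne, map_tprod]
  refine Finset.sum_congr rfl fun j _ => ?_
  have hslot : (fun l => (if l = j then A else LinearMap.id) (Finsupp.single (σ l) (1 : R))) =
      update (fun l => Finsupp.single (σ l) 1) j (s (σ j) • Finsupp.single (t (σ j)) 1) := by
    ext l : 1
    by_cases hl : l = j
    · subst hl; simp [hA]
    · simp [hl]
  rw [hslot, MultilinearMap.map_update_smul]
  congr 2
  ext l : 1
  by_cases hl : l = j
  · subst hl; simp
  · simp [hl]

theorem exists_mem_support_apply_eq_of_diagonalAction_eq_zero [NoZeroDivisors R]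
    (hA : ∀ b, A (Finsupp.single b 1) = s b • Finsupp.single (t b) 1)
    (ht : Set.InjOn t {b | s b ≠ 0}) {r : ⨂[R] _ : κ, ι →₀ R} (hr : diagonalAction A r = 0)
    {σ₀ : κ → ι} (hσ₀ : σ₀ ∈ ((tensorPowerBasis R κ ι).repr r).support) {j₀ : κ}
    (hs : s (σ₀ j₀) ≠ 0) :
    ∃ σ ∈ ((tensorPowerBasis R κ ι).repr r).support, σ j₀ = t (σ₀ j₀) := by
  classical
  by_contra hnot
  set β := tensorPowerBasis R κ ι
  set c := β.repr r
  set σ' := update σ₀ j₀ (t (σ₀ j₀))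
  have hexp : β.repr (diagonalAction A r) σ' = ∑ σ ∈ c.support, ∑ j,
      c σ * (s (σ j) * Finsupp.single (update σ j (t (σ j))) 1 σ') := by
    conv_lhs => rw [← β.linearCombination_repr r]
    simp only [β, c, Finsupp.linearCombination_apply, Finsupp.sum, map_sum, map_smul,
      diagonalAction_tensorPowerBasis hA, Module.Basis.repr_self, Finsupp.coe_finsetSum,
      Finsupp.coe_smul, Finset.sum_apply, Pi.smul_apply, smul_eq_mul, Finset.mul_sum]
  have hunique : ∀ σ ∈ c.support, ∀ j, s (σ j) ≠ 0 → update σ j (t (σ j)) = σ' →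
      σ = σ₀ ∧ j = j₀ := by
    intro σ hσ j hsj hσ'
    have hj : j = j₀ := by
      by_contra hj
      refine hnot ⟨σ, hσ, ?_⟩
      simpa [σ', Ne.symm hj] using congrFun hσ' j₀
    subst hj
    have hslot : σ j = σ₀ j := ht hsj hs (by simpa [σ'] using congrFun hσ' j)
    refine ⟨funext fun l => ?_, rfl⟩
    by_cases hl : l = j
    · rw [hl, hslot]
    · simpa [σ', hl] using congrFun hσ' l
  have hvanish : ∀ σ ∈ c.support, ∀ j, ¬(σ = σ₀ ∧ j = j₀) →
      c σ * (s (σ j) * Finsupp.single (update σ j (t (σ j))) 1 σ') = 0 := by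
    intro σ hσ j hne
    by_cases hsj : s (σ j) = 0
    · simp [hsj]
    · rw [Finsupp.single_apply, if_neg fun h => hne (hunique σ hσ j hsj h), mul_zero, mul_zero]
  have hcoef : β.repr (diagonalAction A r) σ' = c σ₀ * s (σ₀ j₀) := by
    rw [hexp, Finset.sum_eq_single_of_mem σ₀ hσ₀, Finset.sum_eq_single j₀]
    · simp [σ']
    · exact fun j _ hj => hvanish σ₀ hσ₀ j fun h => hj h.2
    · exact fun h => absurd (Finset.mem_univ j₀) h
    · exact fun σ hσ hne => Finset.sum_eq_zero fun j _ => hvanish σ hσ j fun h => hne h.1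
  rw [hr, map_zero, Finsupp.zero_apply] at hcoef
  exact mul_ne_zero (Finsupp.mem_support_iff.mp hσ₀) hs hcoef.symm

end DiagonalAction

/-- `[e_i, e_j] = brCoeff K i j • e_{brTgt i j}`; the default branches are pairs whose bracket
vanishes, so there `brTgt` is arbitrary. -/
def brTgt : SVIx → SVIx → SVIx
  | Sum.inl m, Sum.inl n => Sum.inl (m + n)
  | Sum.inl m, Sum.inr (Sum.inl n) => Sum.inr (Sum.inl (m + n))
  | Sum.inl m, Sum.inr (Sum.inr n) => Sum.inr (Sum.inr (m + n))
  | Sum.inr (Sum.inl n), Sum.inl m => Sum.inr (Sum.inl (m + n))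
  | Sum.inr (Sum.inl a), Sum.inr (Sum.inl b) => Sum.inr (Sum.inr (a + b + 1))
  | Sum.inr (Sum.inr n), Sum.inl m => Sum.inr (Sum.inr (m + n))
  | _, j => j

def brCoeff (K : Type*) [Field K] : SVIx → SVIx → K
  | Sum.inl m, Sum.inl n => ((n - m : ℤ) : K)
  | Sum.inl m, Sum.inr (Sum.inl n) => ((2 * n + 1 - m : ℤ) : K) / 2
  | Sum.inl _, Sum.inr (Sum.inr n) => (n : K)
  | Sum.inr (Sum.inl n), Sum.inl m => -(((2 * n + 1 - m : ℤ) : K) / 2)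
  | Sum.inr (Sum.inl a), Sum.inr (Sum.inl b) => ((b - a : ℤ) : K)
  | Sum.inr (Sum.inr n), Sum.inl _ => -(n : K)
  | _, _ => 0

theorem bk_single_single_s6 (K : Type) [Field K] (i j : SVIx) :
    bk K (Finsupp.single i 1) (Finsupp.single j 1) =
      brCoeff K i j • Finsupp.single (brTgt i j) 1 := by
  rw [bk, Finsupp.lsum_single, LinearMap.toSpanSingleton_apply, one_smul, Finsupp.lsum_single,
    LinearMap.toSpanSingleton_apply, one_smul]
  rcases i with m | m | m <;> rcases j with p | p | p <;>
    simp [brIx, brCoeff, brTgt, Lb, Yb, Mb]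

theorem brTgt_injOn (K : Type*) [Field K] (i : SVIx) :
    Set.InjOn (brTgt i) {b | brCoeff K i b ≠ 0} := by
  rintro (b | b | b) hb (b' | b' | b') hb' h <;> rcases i with i | i | i <;>
    simp_all [brTgt, brCoeff]

theorem exists_brCoeff_ne_zero_brTgt_notMem {b : SVIx} (hb : b ≠ Sum.inr (Sum.inr 0))
    (S : Finset SVIx) : ∃ i, brCoeff F i b ≠ 0 ∧ brTgt i b ∉ S := by
  obtain ⟨N, hN⟩ := (S.preimage (Sum.inr ∘ Sum.inr)
    ((Sum.inr_injective.comp Sum.inr_injective).injOn)).bddAbove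
  have hM : ∀ m, N < m → Sum.inr (Sum.inr m) ∉ S := fun m hm hmS =>
    (hN (Finset.mem_preimage.mpr hmS)).not_gt hm
  rcases b with m | m | m
  · exact ⟨Sum.inr (Sum.inr (max 1 (N - m + 1))),
      by simp only [brCoeff, neg_ne_zero, Int.cast_ne_zero]; omega,
      hM _ (by omega)⟩
  · exact ⟨Sum.inr (Sum.inl (max (m + 1) (N - m))),
      by simp only [brCoeff, Int.cast_ne_zero]; omega,
      hM _ (by omega)⟩
  · exact ⟨Sum.inl (N - m + 1), by simpa [brCoeff] using hb, hM _ (by omega)⟩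

/-- Any invariant of the adjoint diagonal action of `L` on `L^{⊗n}` is a scalar
multiple of `M₀ ⊗ ⋯ ⊗ M₀`. -/
theorem sv_invariants_tensor_power (n : ℕ) (r : ⨂[F] _ : Fin n, SVL F)
    (h : ∀ x : SVL F, adTn F n x r = 0) :
    ∃ c : F, r = c • (PiTensorProduct.tprod F fun _ : Fin n => Mb F 0) := by
  set β := tensorPowerBasis F (Fin n) SVIx
  set M₀ : Fin n → SVIx := fun _ => Sum.inr (Sum.inr 0)
  have hsupp : (β.repr r).support ⊆ {M₀} := by
    intro σ hσ
    rw [Finset.mem_singleton]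
    by_contra hne
    obtain ⟨j, hj⟩ := Function.ne_iff.mp hne
    obtain ⟨i, hs, hS⟩ :=
      exists_brCoeff_ne_zero_brTgt_notMem F hj ((β.repr r).support.image (· j))
    obtain ⟨σ', hσ', hσ'j⟩ := exists_mem_support_apply_eq_of_diagonalAction_eq_zero
      (bk_single_single_s6 F i) (brTgt_injOn F i) (h (Finsupp.single i 1)) hσ hs
    exact hS (Finset.mem_image.mpr ⟨σ', hσ', hσ'j⟩)
  obtain ⟨c, hc⟩ := Finsupp.support_subset_singleton'.mp hsupp
  refine ⟨c, ?_⟩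
  rw [← β.repr.symm_apply_apply r, hc, Module.Basis.repr_symm_single]
  simp [β, M₀, Mb]
end

section
/- Let L be the Schrödinger-Virasoro algebra and r ∈ Im(1−τ) ⊂ L ⊗ L, where τ is the twist map. Then r satisfies the classical Yang-Baxter equation c(r) = 0 if and only if r satisfies the modified Yang-Baxter equation x·c(r) = 0 for all x ∈ L. -/
open TensorProduct

variable (F : Type) [Field F] [CharZero F]

abbrev T3 := SVL F ⊗[F] (SVL F ⊗[F] SVL F)

/-- The bracket as a linear map on `L ⊗ L`. -/
noncomputable def lb : VV F →ₗ[F] SVL F := TensorProduct.lift (bk F)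

/-- The linear map with `(a ⊗ b) ⊗ (a' ⊗ b') ↦ [a,a'] ⊗ b ⊗ b' + a ⊗ [b,a'] ⊗ b' + a ⊗ a' ⊗ [b,b']`,
so that the classical Yang–Baxter expression is `c(r) = cmap (r ⊗ r)`. -/
noncomputable def cmap : (VV F ⊗[F] VV F) →ₗ[F] T3 F :=
  ((TensorProduct.map (lb F) (LinearMap.id : VV F →ₗ[F] VV F)) ∘ₗ
      (TensorProduct.tensorTensorTensorComm F (SVL F) (SVL F) (SVL F) (SVL F)).toLinearMap)
  + ((LinearMap.lTensor (SVL F)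
        ((TensorProduct.map (lb F) (LinearMap.id : SVL F →ₗ[F] SVL F)) ∘ₗ
          (TensorProduct.assoc F (SVL F) (SVL F) (SVL F)).symm.toLinearMap)) ∘ₗ
      (TensorProduct.assoc F (SVL F) (SVL F) (VV F)).toLinearMap)
  + (((TensorProduct.assoc F (SVL F) (SVL F) (SVL F)).toLinearMap) ∘ₗ
      (TensorProduct.map (LinearMap.id : VV F →ₗ[F] VV F) (lb F)) ∘ₗ
      (TensorProduct.tensorTensorTensorComm F (SVL F) (SVL F) (SVL F) (SVL F)).toLinearMap)

/-- The classical Yang–Baxter expression `c(r)`. -/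
noncomputable def cyb (r : VV F) : T3 F := cmap F (r ⊗ₜ[F] r)

/-- The adjoint diagonal action of `x ∈ L` on `L ⊗ L ⊗ L`. -/
noncomputable def adT3 (x : SVL F) : T3 F →ₗ[F] T3 F :=
  LinearMap.rTensor (VV F) (bk F x) + LinearMap.lTensor (SVL F) (adVb F x)

/-- The cyclic map `ξ : x₁ ⊗ x₂ ⊗ x₃ ↦ x₂ ⊗ x₃ ⊗ x₁`. -/
noncomputable def xi : T3 F →ₗ[F] T3 F :=
  (TensorProduct.assoc F (SVL F) (SVL F) (SVL F)).toLinearMap ∘ₗ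
    (TensorProduct.comm F (SVL F) (VV F)).toLinearMap

/-- `1 + ξ + ξ²` applied to an element of `L ⊗ L ⊗ L`. -/
noncomputable def cyclicSum (t : T3 F) : T3 F := t + xi F t + xi F (xi F t)

noncomputable instance : Zero (T3 F) :=
  (inferInstance : AddCommMonoid (T3 F)).toAddMonoid.toZero

/-!
The forward implication is trivial. For the converse, write `c(r)` in the basis
`e_i ⊗ e_j ⊗ e_k`. Each `ad L_m` shifts the index of one factor by `m` and multiplies by a scalar
which, for `m` even and larger than twice every degree occurring in `c(r)`, vanishes only on `M_0`.
Evaluating `L_m · c(r) = 0` at a point with one index shifted by `m` isolates a single term, so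
every coordinate other than that of `M_0 ⊗ M_0 ⊗ M_0` vanishes. That coordinate is symmetric in
the three factors while the bracket is antisymmetric, so it changes sign when `r` is replaced by
`τ r = -r`, hence is zero.
-/

namespace SchrodingerVirasoro

variable {F : Type} [Field F]

def idxM0 : SVIx := Sum.inr (Sum.inr 0)

variable (F) in
noncomputable def coord3 : T3 F ≃ₗ[F] (SVIx × SVIx × SVIx →₀ F) :=
  (TensorProduct.congr (LinearEquiv.refl F (SVL F)) (finsuppTensorFinsupp' F SVIx SVIx)).trans
    (finsuppTensorFinsupp' F SVIx (SVIx × SVIx))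

@[simp]
lemma coord3_tmul (x y z : SVL F) (i j k : SVIx) :
    coord3 F (x ⊗ₜ[F] (y ⊗ₜ[F] z)) (i, j, k) = x i * (y j * z k) := by
  simp [coord3, finsuppTensorFinsupp'_apply_apply]

lemma bk_single (i j : SVIx) (c d : F) :
    bk F (Finsupp.single i c) (Finsupp.single j d) = (c * d) • brIx F i j := by
  simp [bk, LinearMap.toSpanSingleton_apply, smul_smul]

lemma brIx_swap (i j : SVIx) : brIx F j i = -brIx F i j := by
  rcases i with m | m | m <;> rcases j with n | n | n <;>
    simp only [brIx, neg_neg, neg_zero, add_comm m n] <;>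
    rw [← neg_smul, ← Int.cast_neg, neg_sub]

lemma bk_swap (x y : SVL F) : bk F y x = -bk F x y := by
  induction x using Finsupp.induction_linear with
  | zero => simp
  | add x x' hx hx' => simp [hx, hx', add_comm]
  | single i c =>
    induction y using Finsupp.induction_linear with
    | zero => simp
    | add y y' hy hy' => simp [hy, hy', add_comm]
    | single j d => rw [bk_single, bk_single, brIx_swap, smul_neg, mul_comm]

def shift (m : ℤ) : SVIx → SVIx
  | Sum.inl n => Sum.inl (n + m)
  | Sum.inr (Sum.inl n) => Sum.inr (Sum.inl (n + m))
  | Sum.inr (Sum.inr n) => Sum.inr (Sum.inr (n + m))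

def degree : SVIx → ℤ
  | Sum.inl n => n
  | Sum.inr (Sum.inl n) => n
  | Sum.inr (Sum.inr n) => n

@[simp]
lemma shift_neg_shift (m : ℤ) (i : SVIx) : shift (-m) (shift m i) = i := by
  rcases i with n | n | n <;> simp [shift]

@[simp]
lemma shift_shift_neg (m : ℤ) (i : SVIx) : shift m (shift (-m) i) = i := by
  simpa using shift_neg_shift (-m) i

lemma degree_shift (m : ℤ) (i : SVIx) : degree (shift m i) = degree i + m := by
  rcases i with n | n | n <;> rfl

variable (F) in
noncomputable def adLCoeff (m : ℤ) : SVIx → F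
  | Sum.inl n => ((n - m : ℤ) : F)
  | Sum.inr (Sum.inl n) => ((2 * n + 1 - m : ℤ) : F) / 2
  | Sum.inr (Sum.inr n) => ((n : ℤ) : F)

lemma bk_Lb_single (m : ℤ) (i : SVIx) (c : F) :
    bk F (Lb F m) (Finsupp.single i c) = Finsupp.single (shift m i) (c * adLCoeff F m i) := by
  rw [Lb, bk_single]
  rcases i with n | n | n <;>
    simp only [brIx, adLCoeff, shift, Lb, Yb, Mb, Finsupp.smul_single, smul_eq_mul, mul_one,
      one_mul, add_comm m n]

lemma bk_Lb_apply (m : ℤ) (x : SVL F) (i : SVIx) :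
    bk F (Lb F m) x i = adLCoeff F m (shift (-m) i) * x (shift (-m) i) := by
  induction x using Finsupp.induction_linear with
  | zero => simp
  | add x y hx hy => simp [hx, hy, mul_add]
  | single j c =>
    rw [bk_Lb_single]
    by_cases h : shift m j = i
    · subst h
      simp [mul_comm]
    · have h' : shift (-m) i ≠ j := fun e => h (by rw [← e, shift_shift_neg])
      simp [h, Ne.symm h']

lemma coord3_adT3_Lb (m : ℤ) (t : T3 F) (i j k : SVIx) :
    coord3 F (adT3 F (Lb F m) t) (i, j, k) =
      adLCoeff F m (shift (-m) i) * coord3 F t (shift (-m) i, j, k)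
      + adLCoeff F m (shift (-m) j) * coord3 F t (i, shift (-m) j, k)
      + adLCoeff F m (shift (-m) k) * coord3 F t (i, j, shift (-m) k) := by
  induction t using TensorProduct.induction_on with
  | zero => simp
  | add a b ha hb => simp only [map_add, Finsupp.add_apply, ha, hb]; ring
  | tmul x yz =>
    induction yz using TensorProduct.induction_on with
    | zero => simp
    | add a b ha hb => simp only [tmul_add, map_add, Finsupp.add_apply, ha, hb]; ring
    | tmul y z =>
      simp only [adT3, adVb, LinearMap.add_apply, LinearMap.comp_apply, LinearMap.coe_rTensorHom,
        LinearMap.coe_lTensorHom, LinearMap.rTensor_tmul, LinearMap.lTensor_tmul, tmul_add,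
        map_add, Finsupp.add_apply, coord3_tmul, bk_Lb_apply]
      ring

lemma eq_idxM0_of_adLCoeff_eq_zero [CharZero F] {N : ℕ} {i : SVIx} (hi : (degree i).natAbs ≤ N)
    (h : adLCoeff F (2 * N + 2) i = 0) : i = idxM0 := by
  rcases i with n | n | n <;> simp only [degree] at hi
  · rw [adLCoeff, Int.cast_eq_zero] at h
    omega
  · rw [adLCoeff, div_eq_zero_iff, or_iff_left two_ne_zero, Int.cast_eq_zero] at h
    omega
  · rw [adLCoeff, Int.cast_eq_zero] at h
    rw [h, idxM0]

lemma exists_natAbs_degree_le (s : Finset (SVIx × SVIx × SVIx)) :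
    ∃ N : ℕ, ∀ q ∈ s, (degree q.1).natAbs ≤ N ∧ (degree q.2.1).natAbs ≤ N ∧
      (degree q.2.2).natAbs ≤ N := by
  refine ⟨s.sup fun q => max (degree q.1).natAbs (max (degree q.2.1).natAbs (degree q.2.2).natAbs),
    fun q hq => ?_⟩
  have := Finset.le_sup (f := fun q : SVIx × SVIx × SVIx =>
    max (degree q.1).natAbs (max (degree q.2.1).natAbs (degree q.2.2).natAbs)) hq
  omega

lemma coord3_eq_zero_of_forall_adT3_Lb [CharZero F] {t : T3 F}
    (ht : ∀ m : ℤ, adT3 F (Lb F m) t = 0) {i j k : SVIx} (hijk : (i, j, k) ≠ (idxM0, idxM0, idxM0)) :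
    coord3 F t (i, j, k) = 0 := by
  obtain ⟨N, hN⟩ := exists_natAbs_degree_le (coord3 F t).support
  have hout : ∀ q : SVIx × SVIx × SVIx, N < (degree q.1).natAbs ∨ N < (degree q.2.1).natAbs ∨
      N < (degree q.2.2).natAbs → coord3 F t q = 0 := by
    intro q hq
    by_contra hne
    have := hN q (Finsupp.mem_support_iff.mpr hne)
    omega
  set m : ℤ := 2 * N + 2
  have hfar : ∀ l : SVIx, (degree l).natAbs ≤ N → N < (degree (shift m l)).natAbs := by
    intro l hl
    rw [degree_shift]
    omega
  have hzero : ∀ q, coord3 F (adT3 F (Lb F m) t) q = 0 := by simp [ht m]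
  by_contra hne
  obtain ⟨hi, hj, hk⟩ : (degree i).natAbs ≤ N ∧ (degree j).natAbs ≤ N ∧ (degree k).natAbs ≤ N :=
    hN _ (Finsupp.mem_support_iff.mpr hne)
  have ci : adLCoeff F m i = 0 := by
    have := hzero (shift m i, j, k)
    rw [coord3_adT3_Lb, shift_neg_shift, hout (shift m i, _, k) (.inl (hfar i hi)),
      hout (shift m i, j, _) (.inl (hfar i hi))] at this
    simpa [hne] using this
  have cj : adLCoeff F m j = 0 := by
    have := hzero (i, shift m j, k)
    rw [coord3_adT3_Lb, shift_neg_shift, hout (_, shift m j, k) (.inr (.inl (hfar j hj))),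
      hout (i, shift m j, _) (.inr (.inl (hfar j hj)))] at this
    simpa [hne] using this
  have ck : adLCoeff F m k = 0 := by
    have := hzero (i, j, shift m k)
    rw [coord3_adT3_Lb, shift_neg_shift, hout (_, j, shift m k) (.inr (.inr (hfar k hk))),
      hout (i, _, shift m k) (.inr (.inr (hfar k hk)))] at this
    simpa [hne] using this
  exact hijk (by rw [eq_idxM0_of_adLCoeff_eq_zero hi ci, eq_idxM0_of_adLCoeff_eq_zero hj cj,
    eq_idxM0_of_adLCoeff_eq_zero hk ck])

lemma eq_zero_of_forall_adT3_Lb [CharZero F] {t : T3 F} (ht : ∀ m : ℤ, adT3 F (Lb F m) t = 0)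
    (h0 : coord3 F t (idxM0, idxM0, idxM0) = 0) : t = 0 := by
  refine (coord3 F).map_eq_zero_iff.mp (Finsupp.ext fun ⟨i, j, k⟩ => ?_)
  by_cases hijk : (i, j, k) = (idxM0, idxM0, idxM0)
  · rw [hijk, h0, Finsupp.zero_apply]
  · exact coord3_eq_zero_of_forall_adT3_Lb ht hijk

lemma cmap_tmul (a b a' b' : SVL F) :
    cmap F ((a ⊗ₜ[F] b) ⊗ₜ[F] (a' ⊗ₜ[F] b')) =
      bk F a a' ⊗ₜ[F] (b ⊗ₜ[F] b') + a ⊗ₜ[F] (bk F b a' ⊗ₜ[F] b') +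
        a ⊗ₜ[F] (a' ⊗ₜ[F] bk F b b') := by
  simp [cmap, lb]

@[simp]
lemma tau_tmul (a b : SVL F) : tau F (a ⊗ₜ[F] b) = b ⊗ₜ[F] a := rfl

lemma coord3_cmap_tau (u v : VV F) :
    coord3 F (cmap F (tau F v ⊗ₜ[F] tau F u)) (idxM0, idxM0, idxM0) =
      -coord3 F (cmap F (u ⊗ₜ[F] v)) (idxM0, idxM0, idxM0) := by
  induction u using TensorProduct.induction_on with
  | zero => simp
  | add u u' hu hu' => simp only [map_add, add_tmul, tmul_add, Finsupp.add_apply, hu, hu', neg_add]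
  | tmul a b =>
    induction v using TensorProduct.induction_on with
    | zero => simp
    | add v v' hv hv' =>
      simp only [map_add, add_tmul, tmul_add, Finsupp.add_apply, hv, hv', neg_add]
    | tmul a' b' =>
      simp only [tau_tmul, cmap_tmul, map_add, Finsupp.add_apply, coord3_tmul]
      rw [bk_swap b' b, bk_swap a' b, bk_swap a' a]
      simp only [Finsupp.neg_apply]
      ring

lemma tau_eq_neg_of_mem_skewIm {r : VV F} (hr : r ∈ skewIm F) : tau F r = -r := by
  obtain ⟨s, rfl⟩ := hr
  change tau F (s - tau F s) = -(s - tau F s)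
  rw [map_sub, tau, LinearEquiv.coe_toLinearMap, TensorProduct.comm_comm, neg_sub]

lemma coord3_cyb_eq_zero_of_tau_eq_neg [CharZero F] {r : VV F} (hr : tau F r = -r) :
    coord3 F (cyb F r) (idxM0, idxM0, idxM0) = 0 := by
  have h := coord3_cmap_tau r r
  rw [hr, neg_tmul, tmul_neg, neg_neg] at h
  exact CharZero.eq_neg_self_iff.mp h

end SchrodingerVirasoro

open SchrodingerVirasoro

/-- For `r ∈ Im(1-τ)`, `r` satisfies the classical Yang–Baxter equation iff it
satisfies the modified Yang–Baxter equation. -/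
theorem sv_cybe_iff_mybe :
    ∀ r ∈ skewIm F, (cyb F r = 0 ↔ ∀ x : SVL F, adT3 F x (cyb F r) = 0) := by
  intro r hr
  refine ⟨fun h x => by rw [h, map_zero], fun h => ?_⟩
  exact eq_zero_of_forall_adT3_Lb (fun m => h (Lb F m))
    (coord3_cyb_eq_zero_of_tau_eq_neg (tau_eq_neg_of_mem_skewIm hr))
end
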